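/- Let P, P' be two distinct projective planes in ℙ^6 meeting in exactly one point. Then the space of quadratic forms on ℙ^6 vanishing on both P and P' has codimension 5 inside the space of quadratic forms vanishing on P. -/

import Mathlib

open MvPolynomial

/-- The submodule of polynomials vanishing on a subset `s` of `ℂⁿ`. -/
noncomputable def vanishingOn (n : ℕ) (s : Set (Fin n → ℂ)) :
    Submodule ℂ (MvPolynomial (Fin n) ℂ) where
  carrier := {Q | ∀ x ∈ s, MvPolynomial.eval x Q = 0}
  add_mem' := by intro a b ha hb x hx; simp [ha x hx, hb x hx]
  zero_mem' := by intro x hx; simp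
  smul_mem' := by intro c a ha x hx; simp [ha x hx]

/-!
Choose a basis of `ℂ⁷` adapted to both `W` and `W'`: extend a basis of `W ⊓ W'` to bases of `W`
and of `W'`, and then to the whole space. In these coordinates `W` and `W'` are coordinate
subspaces, spanned by the basis vectors indexed by `A` and `B`, and a form vanishes on the
coordinate subspace of `A` iff none of its monomials involves only variables from `A`. Hence both
spaces of forms are spanned by monomials, and the codimension counts the quadratic monomials in the
three variables of `B` that are not monomials in the one variable of `A ∩ B`: `6 - 1 = 5`.
-/

open Module Submodule

lemma mem_vanishingOn {n : ℕ} {s : Set (Fin n → ℂ)} {Q : MvPolynomial (Fin n) ℂ} :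
    Q ∈ vanishingOn n s ↔ ∀ x ∈ s, eval x Q = 0 :=
  Iff.rfl

lemma vanishingOn_union {n : ℕ} (s t : Set (Fin n → ℂ)) :
    vanishingOn n (s ∪ t) = vanishingOn n s ⊓ vanishingOn n t := by
  ext Q
  simp only [Submodule.mem_inf, mem_vanishingOn]
  exact forall₂_or_left

namespace MvPolynomial

lemma restrictSupport_inter {σ R : Type*} [CommSemiring R] (s t : Set (σ →₀ ℕ)) :
    restrictSupport R (s ∩ t) = restrictSupport R s ⊓ restrictSupport R t := by
  ext
  simp only [Submodule.mem_inf, mem_restrictSupport_iff, Set.subset_inter_iff]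

lemma homogeneousSubmodule_eq_restrictSupport (σ R : Type*) [CommSemiring R] (d : ℕ) :
    homogeneousSubmodule σ R d = restrictSupport R {m | m.degree = d} :=
  homogeneousSubmodule_eq_finsupp_supported σ R d

lemma finrank_restrictSupport {σ K : Type*} [Field K] (s : Set (σ →₀ ℕ)) :
    finrank K (restrictSupport K s) = s.ncard := by
  rw [finrank_eq_nat_card_basis (basisRestrictSupport K s), Nat.card_coe_set_eq]

variable {σ R : Type*} [Fintype σ] [CommSemiring R]

noncomputable def linearSubst (M : Matrix σ σ R) : MvPolynomial σ R →ₐ[R] MvPolynomial σ R :=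
  bind₁ fun i => ∑ j, C (M i j) * X j

lemma eval_linearSubst (M : Matrix σ σ R) (x : σ → R) (Q : MvPolynomial σ R) :
    eval x (linearSubst M Q) = eval (M.mulVec x) Q := by
  rw [← coe_aeval_eq_eval, ← coe_aeval_eq_eval]
  simp only [RingHom.coe_coe, linearSubst, aeval_bind₁]
  congr 2
  funext i
  simp [Matrix.mulVec, dotProduct]

lemma IsHomogeneous.linearSubst (M : Matrix σ σ R) {Q : MvPolynomial σ R} {d : ℕ}
    (hQ : Q.IsHomogeneous d) : (linearSubst M Q).IsHomogeneous d := by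
  simpa [MvPolynomial.linearSubst] using
    hQ.aeval _ fun i => IsHomogeneous.sum _ _ _ fun j _ => isHomogeneous_C_mul_X (M i j) j

variable {K : Type*} [DecidableEq σ] [Field K] [Infinite K]

noncomputable def linearSubstEquiv (e : (σ → K) ≃ₗ[K] (σ → K)) :
    MvPolynomial σ K ≃ₐ[K] MvPolynomial σ K :=
  AlgEquiv.ofAlgHom (linearSubst (LinearMap.toMatrix' e.toLinearMap))
    (linearSubst (LinearMap.toMatrix' e.symm.toLinearMap))
    (AlgHom.ext fun Q => funext fun x => by
      simp [eval_linearSubst, LinearMap.toMatrix'_mulVec])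
    (AlgHom.ext fun Q => funext fun x => by
      simp [eval_linearSubst, LinearMap.toMatrix'_mulVec])

lemma eval_linearSubstEquiv (e : (σ → K) ≃ₗ[K] (σ → K)) (x : σ → K) (Q : MvPolynomial σ K) :
    eval x (linearSubstEquiv e Q) = eval (e x) Q := by
  simp [linearSubstEquiv, eval_linearSubst, LinearMap.toMatrix'_mulVec]

lemma isHomogeneous_linearSubstEquiv_iff (e : (σ → K) ≃ₗ[K] (σ → K)) {Q : MvPolynomial σ K}
    {d : ℕ} : (linearSubstEquiv e Q).IsHomogeneous d ↔ Q.IsHomogeneous d := by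
  refine ⟨fun h => ?_, IsHomogeneous.linearSubst _⟩
  have hsymm := h.linearSubst (LinearMap.toMatrix' e.symm.toLinearMap)
  rwa [show linearSubst _ (linearSubstEquiv e Q) = Q from (linearSubstEquiv e).symm_apply_apply Q]
    at hsymm

end MvPolynomial

lemma Finset.coe_finsuppAntidiag_nat {σ : Type*} [DecidableEq σ] (B : Finset σ) (d : ℕ) :
    (B.finsuppAntidiag d : Set (σ →₀ ℕ)) = {m | m.degree = d ∧ ↑m.support ⊆ (B : Set σ)} := by
  ext m
  simp only [Finset.mem_coe, Finset.mem_finsuppAntidiag, Set.mem_ofPred, Finset.coe_subset]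
  refine and_congr_left fun hm => ?_
  rw [Finsupp.degree_apply,
    Finset.sum_subset hm fun i _ hi => Finsupp.notMem_support_iff.mp hi]

lemma ncard_setOf_degree_eq_support_subset {σ : Type*} (B : Finset σ) (d : ℕ) :
    {m : σ →₀ ℕ | m.degree = d ∧ ↑m.support ⊆ (B : Set σ)}.ncard = B.card.multichoose d := by
  classical
  rw [← Finset.coe_finsuppAntidiag_nat, Set.ncard_coe_finset,
    Finset.card_finsuppAntidiag_nat_eq_multichoose]

lemma finite_setOf_degree_eq {σ : Type*} [Fintype σ] (d : ℕ) :
    {m : σ →₀ ℕ | m.degree = d}.Finite := by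
  classical
  refine (Finset.univ.finsuppAntidiag d).finite_toSet.subset fun m hm => ?_
  rw [Finset.coe_finsuppAntidiag_nat]
  exact ⟨hm, by simp⟩

def coordSubspace {σ K : Type*} [Zero K] (A : Set σ) : Set (σ → K) := {x | ∀ i ∉ A, x i = 0}

lemma prod_pow_eq_zero_of_mem_coordSubspace {σ K : Type*} [CommMonoidWithZero K] {A : Set σ}
    {x : σ → K} (hx : x ∈ coordSubspace A) {m : σ →₀ ℕ} (hm : ¬ ↑m.support ⊆ A) :
    ∏ i ∈ m.support, x i ^ m i = 0 := by
  obtain ⟨i, hi, hiA⟩ := Set.not_subset.mp hm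
  exact Finset.prod_eq_zero hi (by rw [hx i hiA, zero_pow (Finsupp.mem_support_iff.mp hi)])

lemma vanishingOn_coordSubspace {n : ℕ} (A : Set (Fin n)) :
    vanishingOn n (coordSubspace A) = restrictSupport ℂ {m | ¬ ↑m.support ⊆ A} := by
  classical
  ext Q
  rw [mem_vanishingOn, mem_restrictSupport_iff]
  constructor
  · intro hQ m hm
    by_contra hmA
    rw [Set.mem_ofPred_eq, not_not] at hmA
    -- The part of `Q` supported on `A` vanishes everywhere, hence is zero.
    let Q_A := ∑ d ∈ Q.support with ↑d.support ⊆ A, monomial d (coeff d Q)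
    have hQ_A : Q_A = 0 := MvPolynomial.funext fun y => by
      have hy := hQ (fun i => if i ∈ A then y i else 0) fun i hi => if_neg hi
      rw [eval_eq] at hy
      rw [map_zero, ← hy, map_sum, Finset.sum_filter]
      refine Finset.sum_congr rfl fun d _ => ?_
      split_ifs with hd
      · rw [eval_monomial, Finsupp.prod]
        exact congrArg _ (Finset.prod_congr rfl fun i hi => by rw [if_pos (hd hi)])
      · rw [prod_pow_eq_zero_of_mem_coordSubspace (fun i hi => if_neg hi) hd, mul_zero]
    have := congrArg (coeff m) hQ_A
    rw [coeff_sum, Finset.sum_eq_single_of_mem m (Finset.mem_filter.2 ⟨hm, hmA⟩)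
      fun d _ hdm => by rw [coeff_monomial, if_neg hdm], coeff_monomial, if_pos rfl] at this
    exact mem_support_iff.mp hm this
  · intro hQ x hx
    rw [eval_eq]
    exact Finset.sum_eq_zero fun d hd => by
      rw [prod_pow_eq_zero_of_mem_coordSubspace hx (hQ hd), mul_zero]

lemma finrank_homogeneousSubmodule_inf_vanishingOn_coordSubspace_add_multichoose {n : ℕ}
    (A B : Finset (Fin n)) (d : ℕ) :
    finrank ℂ (homogeneousSubmodule (Fin n) ℂ d ⊓ vanishingOn n (coordSubspace A) :
        Submodule ℂ _) + (A ∩ B).card.multichoose d =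
      finrank ℂ (homogeneousSubmodule (Fin n) ℂ d ⊓
        vanishingOn n (coordSubspace A ∪ coordSubspace B) : Submodule ℂ _)
        + B.card.multichoose d := by
  classical
  rw [vanishingOn_union, vanishingOn_coordSubspace, vanishingOn_coordSubspace,
    homogeneousSubmodule_eq_restrictSupport, ← inf_assoc, ← restrictSupport_inter,
    ← restrictSupport_inter, finrank_restrictSupport, finrank_restrictSupport,
    ← ncard_setOf_degree_eq_support_subset, ← ncard_setOf_degree_eq_support_subset]
  set S := {m : Fin n →₀ ℕ | m.degree = d} ∩ {m | ¬ ↑m.support ⊆ (A : Set (Fin n))}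
  have hS : S.Finite := (finite_setOf_degree_eq d).subset Set.inter_subset_left
  have hdiff : S \ {m | ¬ ↑m.support ⊆ (B : Set (Fin n))} =
      {m | m.degree = d ∧ ↑m.support ⊆ (B : Set (Fin n))} \
        {m | m.degree = d ∧ ↑m.support ⊆ ((A ∩ B : Finset (Fin n)) : Set (Fin n))} := by
    ext m
    simp only [S, Set.mem_sdiff, Set.mem_inter_iff, Set.mem_ofPred, Finset.coe_inter,
      Set.subset_inter_iff]
    tauto
  have hsplit :=
    Set.ncard_inter_add_ncard_sdiff_eq_ncard S {m | ¬ ↑m.support ⊆ (B : Set (Fin n))} hS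
  have hAB :
      {m : Fin n →₀ ℕ | m.degree = d ∧ ↑m.support ⊆ ((A ∩ B : Finset (Fin n)) : Set (Fin n))} ⊆
        {m | m.degree = d ∧ ↑m.support ⊆ (B : Set (Fin n))} :=
    fun m hm => ⟨hm.1, hm.2.trans (by simp)⟩
  have hsub := Set.ncard_sdiff_add_ncard_of_subset hAB
    ((finite_setOf_degree_eq d).subset fun m hm => hm.1)
  rw [hdiff] at hsplit
  omega

lemma finrank_homogeneousSubmodule_inf_vanishingOn_image {n : ℕ}
    (e : (Fin n → ℂ) ≃ₗ[ℂ] (Fin n → ℂ)) (s : Set (Fin n → ℂ)) (d : ℕ) :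
    finrank ℂ (homogeneousSubmodule (Fin n) ℂ d ⊓ vanishingOn n (e '' s) : Submodule ℂ _) =
      finrank ℂ (homogeneousSubmodule (Fin n) ℂ d ⊓ vanishingOn n s : Submodule ℂ _) := by
  have hcomap : homogeneousSubmodule (Fin n) ℂ d ⊓ vanishingOn n (e '' s) =
      (homogeneousSubmodule (Fin n) ℂ d ⊓ vanishingOn n s).comap
        (linearSubstEquiv e).toLinearEquiv.toLinearMap := by
    ext Q
    simp only [Submodule.mem_comap, Submodule.mem_inf, mem_homogeneousSubmodule]
    refine and_congr (isHomogeneous_linearSubstEquiv_iff e).symm ?_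
    simp only [mem_vanishingOn, Set.forall_mem_image, eval_linearSubstEquiv,
      LinearEquiv.coe_coe, AlgEquiv.toLinearEquiv_apply]
  rw [hcomap, Submodule.comap_equiv_eq_map_symm, LinearEquiv.finrank_map_eq]

theorem Submodule.exists_basis_span_image_eq {K V : Type*} [Field K] [AddCommGroup V]
    [Module K V] [FiniteDimensional K V] {n : ℕ} (hn : finrank K V = n) (W W' : Submodule K V) :
    ∃ (b : Basis (Fin n) K V) (A B : Finset (Fin n)),
      span K (b '' A) = W ∧ span K (b '' B) = W' := by
  classical
  obtain ⟨s₀, hs₀, hspan₀, hli₀⟩ := exists_linearIndependent K ((W ⊓ W' : Submodule K V) : Set V)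
  rw [Submodule.span_eq] at hspan₀
  obtain ⟨s₁, hs₁, hs₀₁, hWs₁, hli₁⟩ :=
    exists_linearIndepOn_id_extension hli₀ (hs₀.trans inf_le_left)
  obtain ⟨s₂, hs₂, hs₀₂, hWs₂, hli₂⟩ :=
    exists_linearIndepOn_id_extension hli₀ (hs₀.trans inf_le_right)
  have hspan₁ : span K s₁ = W := le_antisymm (span_le.2 hs₁) hWs₁
  have hspan₂ : span K s₂ = W' := le_antisymm (span_le.2 hs₂) hWs₂
  -- A vector of `W` spanned by `s₂ \ s₀` lies in `W ⊓ W' = span s₀`, so it vanishes.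
  have hdisj : Disjoint (span K s₁) (span K (s₂ \ s₀)) := by
    have h₀ : Disjoint (span K s₀) (span K (s₂ \ s₀)) :=
      ((linearIndepOn_id_union_iff Set.disjoint_sdiff_right).1
        (by rwa [Set.union_sdiff_cancel hs₀₂])).2.2
    rw [hspan₁, Submodule.disjoint_def]
    intro v hvW hv
    refine Submodule.disjoint_def.1 h₀ v ?_ hv
    rw [hspan₀]
    exact ⟨hvW, span_le.2 (Set.sdiff_subset.trans hs₂) hv⟩
  obtain ⟨s, -, hts, hspan, hli⟩ := exists_linearIndepOn_id_extension
    (hli₁.id_union (hli₂.mono Set.sdiff_subset) hdisj) (Set.subset_univ _)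
  let b₀ := Basis.mk hli.linearIndependent (by simpa using hspan)
  have : Finite s := Module.Finite.finite_basis b₀
  let b := b₀.reindex ((Finite.equivFin s).trans
    (finCongr ((finrank_eq_nat_card_basis b₀).symm.trans hn)))
  have hrange : Set.range b = s := by simp [b, b₀]
  have himage : ∀ t ⊆ s, b '' ↑(Finset.univ.filter (b · ∈ t)) = t := fun t ht => by
    rw [Finset.coe_filter_univ]
    exact Set.image_preimage_eq_of_subset (hrange ▸ ht)
  refine ⟨b, _, _, (himage s₁ ?_).symm ▸ hspan₁, (himage s₂ ?_).symm ▸ hspan₂⟩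
  · exact Set.subset_union_left.trans hts
  · rw [← Set.union_sdiff_cancel hs₀₂]
    exact Set.union_subset ((hs₀₁.trans Set.subset_union_left).trans hts)
      (Set.subset_union_right.trans hts)

lemma Module.Basis.span_image_eq_image_coordSubspace {K V ι : Type*} [Field K] [AddCommGroup V]
    [Module K V] [Fintype ι] (b : Basis ι K V) (A : Set ι) :
    (span K (b '' A) : Set V) = b.equivFun.symm '' coordSubspace A := by
  ext x
  rw [LinearEquiv.image_symm_eq_preimage, SetLike.mem_coe, b.mem_span_image,
    Finsupp.support_subset_iff]
  rfl

lemma Module.Basis.finrank_span_image {K V ι : Type*} [Field K] [AddCommGroup V]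
    [Module K V] (b : Basis ι K V) (A : Finset ι) :
    finrank K (span K (b '' A)) = A.card := by
  rw [Set.image_eq_range]
  exact (finrank_span_eq_card (b.linearIndependent.comp _ Subtype.val_injective)).trans
    (Fintype.card_coe A)

theorem finrank_homogeneousSubmodule_inf_vanishingOn_add_multichoose {n : ℕ}
    (W W' : Submodule ℂ (Fin n → ℂ)) (d : ℕ) :
    finrank ℂ (homogeneousSubmodule (Fin n) ℂ d ⊓ vanishingOn n W : Submodule ℂ _)
        + (finrank ℂ ↥(W ⊓ W')).multichoose d =
      finrank ℂ (homogeneousSubmodule (Fin n) ℂ d ⊓ vanishingOn n (W ∪ W') : Submodule ℂ _)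
        + (finrank ℂ W').multichoose d := by
  classical
  obtain ⟨b, A, B, rfl, rfl⟩ := Submodule.exists_basis_span_image_eq (finrank_fin_fun ℂ) W W'
  have hinf : finrank ℂ ↥(span ℂ (b '' A) ⊓ span ℂ (b '' B)) = (A ∩ B).card := by
    have hdim := Submodule.finrank_sup_add_finrank_inf_eq (span ℂ (b '' A)) (span ℂ (b '' B))
    rw [← Submodule.span_union, ← Set.image_union, ← Finset.coe_union, b.finrank_span_image,
      b.finrank_span_image, b.finrank_span_image] at hdim
    have hcard := Finset.card_union_add_card_inter A B
    omega
  rw [hinf, b.finrank_span_image, b.span_image_eq_image_coordSubspace,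
    b.span_image_eq_image_coordSubspace, ← Set.image_union,
    finrank_homogeneousSubmodule_inf_vanishingOn_image,
    finrank_homogeneousSubmodule_inf_vanishingOn_image]
  exact finrank_homogeneousSubmodule_inf_vanishingOn_coordSubspace_add_multichoose A B d

theorem stmt_5_general (W W' : Submodule ℂ (Fin 7 → ℂ))
    (hW' : Module.finrank ℂ W' = 3)
    (hint : Module.finrank ℂ ↥(W ⊓ W') = 1) :
    Module.finrank ℂ
        ((homogeneousSubmodule (Fin 7) ℂ 2) ⊓ vanishingOn 7 (↑W) : Submodule ℂ _) =
      Module.finrank ℂ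
        ((homogeneousSubmodule (Fin 7) ℂ 2) ⊓ vanishingOn 7 (↑W ∪ ↑W') : Submodule ℂ _)
        + 5 := by
  have h := finrank_homogeneousSubmodule_inf_vanishingOn_add_multichoose W W' 2
  rw [hW', hint, Nat.multichoose_one, show Nat.multichoose 3 2 = 6 by rw [Nat.multichoose_eq]; rfl]
    at h
  omega

/-- STATEMENT 3: if `P = ℙ(W)`, `P' = ℙ(W')` are distinct planes in `ℙ⁶` meeting in exactly one point
(`dim(W ∩ W') = 1`), then the quadratic forms vanishing on both `P` and `P'` have
codimension 5 inside those vanishing on `P`. -/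
theorem stmt_5 (W W' : Submodule ℂ (Fin 7 → ℂ))
    (hW : Module.finrank ℂ W = 3) (hW' : Module.finrank ℂ W' = 3) (hne : W ≠ W')
    (hint : Module.finrank ℂ ↥(W ⊓ W') = 1) :
    Module.finrank ℂ
        ((homogeneousSubmodule (Fin 7) ℂ 2) ⊓ vanishingOn 7 (↑W) : Submodule ℂ _) =
      Module.finrank ℂ
        ((homogeneousSubmodule (Fin 7) ℂ 2) ⊓ vanishingOn 7 (↑W ∪ ↑W') : Submodule ℂ _)
        + 5 :=
  stmt_5_general W W' hW' hint
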